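/- arXiv:0801.2939 — 4 statements merged into one kernel-verified Lean document; each statement's English description precedes it below -/
import Mathlib

section
/- The composition of two quotient maps of hypergraphs is a quotient map; hence the simple minor relation on hypergraphs is a quasi-order. -/
open Finset

abbrev BF := Σ n : ℕ, (Fin n → Bool) → Bool

def Minor (g f : BF) : Prop :=
  ∃ σ : Fin f.1 → Fin g.1, ∀ a : Fin g.1 → Bool, g.2 a = f.2 (a ∘ σ)

def EquivBF (f g : BF) : Prop := Minor f g ∧ Minor g f

def StrictMinor (g f : BF) : Prop := Minor g f ∧ ¬ Minor f g

def Essential {n : ℕ} (f : (Fin n → Bool) → Bool) (i : Fin n) : Prop :=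
  ∃ a b : Fin n → Bool, (∀ j, j ≠ i → a j = b j) ∧ f a ≠ f b

noncomputable def essArity {n : ℕ} (f : (Fin n → Bool) → Bool) : ℕ :=
  Nat.card {i : Fin n // Essential f i}

noncomputable def gapBF (f : BF) : ℕ :=
  sInf {d | ∃ g : BF, StrictMinor g f ∧ d = essArity f.2 - essArity g.2}

def fH {n : ℕ} (𝓔 : Finset (Finset (Fin n))) : (Fin n → Bool) → Bool :=
  fun a => decide (Odd (𝓔.filter (fun E => ∀ i ∈ E, a i = true)).card)

def IsQuotientMap {n m : ℕ} (𝓔 : Finset (Finset (Fin n)))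
    (𝓔' : Finset (Finset (Fin m))) (h : Fin m → Fin n) : Prop :=
  ∀ s : Finset (Fin n), s ∈ 𝓔 ↔ Odd (𝓔'.filter (fun t => t.image h = s)).card

abbrev HG := Σ n : ℕ, Finset (Finset (Fin n))

def HMinor (H H' : HG) : Prop := ∃ h : Fin H'.1 → Fin H.1, IsQuotientMap H.2 H'.2 h

def identEdges {n : ℕ} (𝓔 : Finset (Finset (Fin n))) (i j : Fin n) :
    Finset (Finset (Fin n)) :=
  Finset.univ.filter (fun E => j ∉ E ∧
    ((i ∉ E ∧ E ∈ 𝓔) ∨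
     (i ∈ E ∧ Odd ((if insert j E ∈ 𝓔 then 1 else 0) +
        (if E ∈ 𝓔 then 1 else 0) + (if insert j (E.erase i) ∈ 𝓔 then 1 else 0)))))

def EdgeIso {n : ℕ} (𝓔 𝓔' : Finset (Finset (Fin n))) : Prop :=
  ∃ φ : Fin n ≃ Fin n, ∀ s : Finset (Fin n), s.image φ ∈ 𝓔' ↔ s ∈ 𝓔

def IrreducibleBF (f : BF) : Prop :=
  ∃ f' : BF, StrictMinor f' f ∧ ∀ g : BF, StrictMinor g f → Minor g f'

/-- Split the fibre of `g ∘ f` over `c` into fibres of `f`: modulo 2 only the odd ones count. -/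
theorem odd_card_filter_comp_eq_iff {ι κ μ : Type*} [Fintype κ] [DecidableEq κ] [DecidableEq μ]
    (S : Finset ι) (f : ι → κ) (g : κ → μ) (c : μ) :
    Odd #{x ∈ S | g (f x) = c} ↔ Odd #{y | Odd #{x ∈ S | f x = y} ∧ g y = c} := by
  rw [card_eq_sum_card_fiberwise (f := f) (t := {y | g y = c}) (by simp +contextual [Set.MapsTo]),
    odd_sum_iff_odd_card_odd, filter_filter]
  congr! 2
  refine filter_congr fun y _ => ?_
  rw [and_comm]
  refine and_congr_left fun hy => ?_
  rw [filter_filter]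
  congr! 2
  exact filter_congr fun x _ => ⟨And.right, fun hx => ⟨hx ▸ hy, hx⟩⟩

theorem IsQuotientMap.comp {n m p : ℕ} {𝓔 : Finset (Finset (Fin n))}
    {𝓔' : Finset (Finset (Fin m))} {𝓔'' : Finset (Finset (Fin p))} {h' : Fin m → Fin n}
    {h'' : Fin p → Fin m} (hq' : IsQuotientMap 𝓔 𝓔' h') (hq'' : IsQuotientMap 𝓔' 𝓔'' h'') :
    IsQuotientMap 𝓔 𝓔'' (h' ∘ h'') := by
  intro s
  simp only [hq' s, ← image_image]
  rw [odd_card_filter_comp_eq_iff (f := image h'') (g := image h')]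
  congr! 2
  ext u
  simp [hq'' u]

theorem IsQuotientMap.id {n : ℕ} (𝓔 : Finset (Finset (Fin n))) : IsQuotientMap 𝓔 𝓔 id := by
  intro s
  simp_rw [image_id, filter_eq']
  split_ifs with hs <;> simp [hs]

theorem HMinor.refl (H : HG) : HMinor H H := ⟨id, .id H.2⟩

theorem HMinor.trans {H H' H'' : HG} : HMinor H H' → HMinor H' H'' → HMinor H H''
  | ⟨h', hq'⟩, ⟨h'', hq''⟩ => ⟨h' ∘ h'', hq'.comp hq''⟩

theorem quotient_map_comp_and_quasi_order :
    (∀ (n m p : ℕ) (𝓔 : Finset (Finset (Fin n))) (𝓔' : Finset (Finset (Fin m)))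
        (𝓔'' : Finset (Finset (Fin p))) (h' : Fin m → Fin n) (h'' : Fin p → Fin m),
        IsQuotientMap 𝓔 𝓔' h' → IsQuotientMap 𝓔' 𝓔'' h'' →
        IsQuotientMap 𝓔 𝓔'' (h' ∘ h'')) ∧
    (∀ H : HG, HMinor H H) ∧
    (∀ H H' H'' : HG, HMinor H H' → HMinor H' H'' → HMinor H H'') :=
  ⟨fun _ _ _ _ _ _ _ _ => IsQuotientMap.comp, HMinor.refl, fun _ _ _ => HMinor.trans⟩
end

section
/- Let 𝓖 = (V, 𝓔) be a connected graph such that there exists a nonedge e ∈ [V]²∖𝓔 for which the identification 𝓖_e has no isolated vertices. Then there exists an edge e' ∈ 𝓔 such that 𝓖_{e'} has no isolated vertices. -/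
open Finset

def graphOf {n : ℕ} (𝓔 : Finset (Finset (Fin n))) : SimpleGraph (Fin n) where
  Adj i j := i ≠ j ∧ ({i, j} : Finset (Fin n)) ∈ 𝓔
  symm := ⟨fun i j h => ⟨h.1.symm, Finset.pair_comm i j ▸ h.2⟩⟩
  loopless := by
    constructor
    intro i h
    exact h.1 rfl

/-! If no edge `{a, b}` works, the vertex left isolated in `𝓖_{ab}` has neighbourhood exactly
`{a, b}`: a neighbour outside `{a, b}` would give a surviving edge, and an adjacency to only one
of `a, b` would make `{l_{ab}, v}` an edge of `𝓖_{ab}`. A connected graph in which every edge is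
the neighbourhood of some vertex is a triangle, so it has no nonedge. -/

namespace SimpleGraph

variable {V : Type*} {G : SimpleGraph V}

theorem Reachable.mem_of_neighborSet_subset {s : Set V} (hs : ∀ x ∈ s, G.neighborSet x ⊆ s)
    {x y : V} (hxy : G.Reachable x y) (hx : x ∈ s) : y ∈ s := by
  obtain ⟨p⟩ := hxy
  induction p with
  | nil => exact hx
  | cons h _ ih => exact ih (hs _ hx h)

theorem neighborSet_eq_pair_of_forall_adj
    (hG : ∀ a b, G.Adj a b → ∃ v, G.neighborSet v = {a, b})
    {v a b : V} (hv : G.neighborSet v = {a, b}) : G.neighborSet b = {v, a} := by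
  obtain ⟨w, hw⟩ := hG v a (by simp [← mem_neighborSet, hv])
  have hwa : G.Adj w a := by simp [← mem_neighborSet, hw]
  have hvw : w ∈ G.neighborSet v := (show G.Adj w v by simp [← mem_neighborSet, hw]).symm
  rw [hv] at hvw
  obtain rfl | rfl := hvw
  · exact absurd hwa (G.loopless.irrefl w)
  · exact hw

theorem adj_of_forall_adj_exists_neighborSet_eq (hconn : G.Connected)
    (hG : ∀ a b, G.Adj a b → ∃ v, G.neighborSet v = {a, b}) {x y : V} (hxy : x ≠ y) :
    G.Adj x y := by
  have : Nontrivial V := ⟨⟨x, y, hxy⟩⟩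
  obtain ⟨b, hxb⟩ := hconn.preconnected.exists_adj_of_nontrivial x
  obtain ⟨v, hv⟩ := hG x b hxb
  have hb := neighborSet_eq_pair_of_forall_adj hG hv
  have hx := neighborSet_eq_pair_of_forall_adj hG (hv.trans (Set.pair_comm x b))
  have hclosed : ∀ s ∈ ({v, x, b} : Set V), G.neighborSet s ⊆ {v, x, b} := by
    rintro s (rfl | rfl | rfl) <;> simp [hv, hb, hx, Set.insert_subset_iff]
  have hy := (hconn.preconnected x y).mem_of_neighborSet_subset hclosed (by simp)
  rw [← mem_neighborSet, hx]
  simp_all [eq_comm]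

end SimpleGraph

section Identification

variable {n : ℕ} {𝓔 : Finset (Finset (Fin n))}

theorem mem_identEdges_of_mem {a b : Fin n} {s : Finset (Fin n)} (hs : s ∈ 𝓔)
    (ha : a ∉ s) (hb : b ∉ s) : s ∈ identEdges 𝓔 a b := by
  simp only [identEdges, mem_filter, mem_univ, true_and]
  exact ⟨hb, Or.inl ⟨ha, hs⟩⟩

theorem singleton_mem_identEdges (hedges : ∀ s ∈ 𝓔, s.card = 2)
    {a b : Fin n} (hab : (graphOf 𝓔).Adj a b) :
    {a} ∈ identEdges 𝓔 a b := by
  have hnot : ∀ c : Fin n, {c} ∉ 𝓔 := fun c hc => by simpa using hedges _ hc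
  have hba : insert b {a} ∈ 𝓔 := by rw [pair_comm]; exact hab.2
  simp only [identEdges, mem_filter, mem_univ, true_and, mem_singleton, erase_singleton,
    insert_empty_eq, hab.1.symm, hba, hnot, if_true, if_false]
  decide

theorem pair_mem_identEdges (hedges : ∀ s ∈ 𝓔, s.card = 2)
    {a b v : Fin n} (hab : a ≠ b) (hva : v ≠ a) (hvb : v ≠ b)
    (hxor : (graphOf 𝓔).Adj v a ↔ ¬ (graphOf 𝓔).Adj v b) : {a, v} ∈ identEdges 𝓔 a b := by
  have hcard : (insert b {a, v} : Finset (Fin n)).card = 3 := by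
    rw [card_insert_of_notMem (by simp [hab.symm, hvb.symm]), card_pair hva.symm]
  have hnot : insert b {a, v} ∉ 𝓔 := fun h => by simpa [hcard] using hedges _ h
  have herase : insert b (({a, v} : Finset (Fin n)).erase a) = {b, v} := by
    rw [erase_insert (by simpa using hva.symm)]
  simp only [graphOf, hva, hvb, ne_eq, not_false_eq_true, true_and] at hxor
  simp only [identEdges, mem_filter, mem_univ, true_and, mem_insert, mem_singleton, herase, hnot,
    if_false, hab.symm, hvb.symm, or_self, not_false_eq_true, true_or, not_true_eq_false,
    false_and, false_or, zero_add]
  rw [pair_comm a v, pair_comm b v]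
  by_cases h : {v, a} ∈ 𝓔
  · simp [h, hxor.mp h]
  · simp [h, not_not.mp (mt hxor.mpr h)]

theorem neighborSet_graphOf_eq_of_isolated (hedges : ∀ s ∈ 𝓔, s.card = 2)
    (hconn : (graphOf 𝓔).Connected) {a b v : Fin n}
    (hab : (graphOf 𝓔).Adj a b) (hvb : v ≠ b) (hv : ∀ s ∈ identEdges 𝓔 a b, v ∉ s) :
    (graphOf 𝓔).neighborSet v = {a, b} := by
  set G := graphOf 𝓔
  have hva : v ≠ a := fun h => hv {a} (singleton_mem_identEdges hedges hab) (by simp [h])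
  have hN : ∀ u, G.Adj v u → u = a ∨ u = b := by
    intro u hvu
    by_contra! hu
    exact hv {v, u} (mem_identEdges_of_mem hvu.2 (by simp [hva.symm, hu.1.symm])
      (by simp [hvb.symm, hu.2.symm])) (mem_insert_self v {u})
  have hboth : G.Adj v a ↔ G.Adj v b := by
    by_contra hxor
    exact hv {a, v} (pair_mem_identEdges hedges hab.1 hva hvb (by tauto)) (by simp)
  have : Nontrivial (Fin n) := ⟨⟨v, b, hvb⟩⟩
  obtain ⟨u, hvu⟩ := hconn.preconnected.exists_adj_of_nontrivial v
  have hvab : G.Adj v a ∧ G.Adj v b := by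
    rcases hN u hvu with rfl | rfl
    · exact ⟨hvu, hboth.mp hvu⟩
    · exact ⟨hboth.mpr hvu, hvu⟩
  ext u
  simp only [SimpleGraph.mem_neighborSet, Set.mem_insert_iff, Set.mem_singleton_iff]
  exact ⟨hN u, by rintro (rfl | rfl); exacts [hvab.1, hvab.2]⟩

end Identification

theorem nonedge_identification_without_isolated (n : ℕ)
    (𝓔 : Finset (Finset (Fin n))) (hedges : ∀ s ∈ 𝓔, s.card = 2)
    (hconn : (graphOf 𝓔).Connected)
    (hne : ∃ i j : Fin n, i ≠ j ∧ ({i, j} : Finset (Fin n)) ∉ 𝓔 ∧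
      ∀ v : Fin n, v ≠ j → ∃ s ∈ identEdges 𝓔 i j, v ∈ s) :
    ∃ i j : Fin n, i ≠ j ∧ ({i, j} : Finset (Fin n)) ∈ 𝓔 ∧
      ∀ v : Fin n, v ≠ j → ∃ s ∈ identEdges 𝓔 i j, v ∈ s := by
  obtain ⟨p, q, hpq, hpqE, -⟩ := hne
  by_contra! hgoal
  have hG : ∀ a b, (graphOf 𝓔).Adj a b → ∃ v, (graphOf 𝓔).neighborSet v = {a, b} :=
    fun a b hab =>
      let ⟨v, hvb, hv⟩ := hgoal a b hab.1 hab.2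
      ⟨v, neighborSet_graphOf_eq_of_isolated hedges hconn hab hvb hv⟩
  exact hpqE (SimpleGraph.adj_of_forall_adj_exists_neighborSet_eq hconn hG hpq).2
end

section
/- In a graph 𝓖 satisfying property (P): if a vertex i has degree at least 3, then the subgraph induced on V(i) = {i} ∪ {neighbors of i} is complete, and in fact V(i) = V, so 𝓖 is a complete graph. -/
open Finset

lemma three_nbrs_degree {n : ℕ} (G : SimpleGraph (Fin n)) [DecidableRel G.Adj]
    {j a b c : Fin n} (hab : a ≠ b) (hac : a ≠ c) (hbc : b ≠ c)
    (ha : G.Adj j a) (hb : G.Adj j b) (hc : G.Adj j c) : 3 ≤ G.degree j := by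
  have hsub : ({a, b, c} : Finset (Fin n)) ⊆ G.neighborFinset j := by
    intro x hx
    simp only [Finset.mem_insert, Finset.mem_singleton] at hx
    rcases hx with rfl | rfl | rfl <;> simpa using ‹_›
  have hcard : ({a, b, c} : Finset (Fin n)).card = 3 := by
    rw [Finset.card_insert_of_notMem (by simp [hab, hac]),
        Finset.card_insert_of_notMem (by simp [hbc]), Finset.card_singleton]
  have := Finset.card_le_card hsub
  rw [hcard, G.card_neighborFinset_eq_degree] at this
  exact this

theorem property_P_high_degree_complete (n : ℕ) (G : SimpleGraph (Fin n))
    [DecidableRel G.Adj]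
    (hP : ∀ i₁ i₂ : Fin n, i₁ ≠ i₂ → ¬ G.Adj i₁ i₂ →
      ∃ j : Fin n, G.degree j = 2 ∧ G.Adj i₁ j ∧ G.Adj j i₂)
    (i : Fin n) (hdeg : 3 ≤ G.degree i) :
    (∀ u v : Fin n, (u = i ∨ G.Adj i u) → (v = i ∨ G.Adj i v) → u ≠ v → G.Adj u v) ∧
    (∀ v : Fin n, v = i ∨ G.Adj i v) ∧ G = ⊤ := by
  -- Step 1: i is adjacent to every other vertex
  have hAll : ∀ v : Fin n, v ≠ i → G.Adj i v := by
    intro v hvi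
    by_contra hniv
    obtain ⟨j, hdj, hij, hjv⟩ := hP i v (Ne.symm hvi) hniv
    have hiv : i ≠ v := Ne.symm hvi
    -- j's neighbors are exactly {i, v}
    have hjne : G.neighborFinset j = {i, v} := by
      have hsub : ({i, v} : Finset (Fin n)) ⊆ G.neighborFinset j := by
        intro x hx
        simp only [Finset.mem_insert, Finset.mem_singleton] at hx
        rcases hx with rfl | rfl
        · simpa using hij.symm
        · simpa using hjv
      refine (Finset.eq_of_subset_of_card_le hsub ?_).symm
      rw [Finset.card_insert_of_notMem (by simp [hiv]), Finset.card_singleton,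
        G.card_neighborFinset_eq_degree, hdj]
    -- get two neighbors of i distinct from j
    have hcard2 : 2 ≤ ((G.neighborFinset i).erase j).card := by
      have h1 := Finset.pred_card_le_card_erase (a := j) (s := G.neighborFinset i)
      have h2 := G.card_neighborFinset_eq_degree i
      omega
    obtain ⟨u₁, hu₁, u₂, hu₂, hu12⟩ :=
      Finset.one_lt_card.mp (lt_of_lt_of_le one_lt_two hcard2)
    have key : ∀ u ∈ (G.neighborFinset i).erase j, G.Adj u v ∧ G.degree v = 2 := by
      intro u hu
      obtain ⟨huj, hu'⟩ := Finset.mem_erase.mp hu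
      rw [SimpleGraph.mem_neighborFinset] at hu'
      have hui : u ≠ i := hu'.ne'
      have hnuj : ¬ G.Adj u j := by
        intro h
        have : u ∈ G.neighborFinset j := by simpa using h.symm
        rw [hjne] at this
        simp only [Finset.mem_insert, Finset.mem_singleton] at this
        rcases this with rfl | rfl
        · exact hui rfl
        · exact hniv hu'
      obtain ⟨k, hdk, huk, hkj⟩ := hP u j huj hnuj
      have : k ∈ G.neighborFinset j := by simpa using hkj.symm
      rw [hjne] at this
      simp only [Finset.mem_insert, Finset.mem_singleton] at this
      rcases this with rfl | rfl
      · omega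
      · exact ⟨huk, hdk⟩
    obtain ⟨ha1, hdv⟩ := key u₁ hu₁
    obtain ⟨ha2, _⟩ := key u₂ hu₂
    have hju1 : j ≠ u₁ := Ne.symm (Finset.mem_erase.mp hu₁).1
    have hju2 : j ≠ u₂ := Ne.symm (Finset.mem_erase.mp hu₂).1
    have := three_nbrs_degree G hju1 hju2 hu12 hjv.symm ha1.symm ha2.symm
    omega
  -- Step 2: completeness
  have hComp : ∀ u v : Fin n, u ≠ v → G.Adj u v := by
    intro u v huv
    by_cases hui : u = i
    · subst hui; exact hAll v (Ne.symm huv)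
    · by_cases hvi : v = i
      · subst hvi; exact (hAll u hui).symm
      · by_contra hnuv
        obtain ⟨j, hdj, huj, hjv⟩ := hP u v huv hnuv
        have hji : j ≠ i := by intro h; subst h; omega
        have hij : G.Adj j i := (hAll j hji).symm
        have := three_nbrs_degree G (Ne.symm hui) (Ne.symm hvi)
          (show u ≠ v from huv) hij huj.symm hjv
        omega
  refine ⟨fun u v _ _ huv => hComp u v huv, fun v => ?_, ?_⟩
  · by_cases h : v = i
    · exact Or.inl h
    · exact Or.inr (hAll v h)
  · ext u v
    simp only [SimpleGraph.top_adj]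
    exact ⟨fun h => h.ne, fun h => hComp u v h⟩
end

section
/- For every graph 𝓖, the union of all autonomous independent sets containing a given vertex i is itself an autonomous independent set (the ai-component of i); consequently the vertex set of 𝓖 is partitioned by its ai-components. -/
open Finset

def AISet {α : Type*} (G : SimpleGraph α) (S : Set α) : Prop :=
  (∀ i ∈ S, ∀ i' ∈ S, ∀ j ∉ S, (G.Adj i j ↔ G.Adj i' j)) ∧
  (∀ i ∈ S, ∀ i' ∈ S, ¬ G.Adj i i')

def aiComp {α : Type*} (G : SimpleGraph α) (i : α) : Set α :=
  ⋃₀ {S : Set α | AISet G S ∧ i ∈ S}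

/-
An ai-set S behaves like a single vertex towards the outside, so two ai-sets S and T through a
common vertex k cannot be joined by an edge: an edge from a ∈ S to b ∈ T ∖ S would, by autonomy
of S, give an edge from k to b inside the independent set T. Hence any family of ai-sets through
a common vertex has an ai-set as its union; in particular the ai-component of i is the largest
ai-set containing i, and two ai-components that meet are both contained in (the ai-set) their
union, hence equal.
-/

namespace AISet

variable {α : Type*} {G : SimpleGraph α}

theorem singleton (i : α) : AISet G {i} :=
  ⟨by rintro a rfl b rfl j -; rfl, by rintro a rfl b rfl; exact G.irrefl⟩

theorem not_adj_of_mem {S T : Set α} {k : α} (hS : AISet G S) (hT : AISet G T)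
    (hkS : k ∈ S) (hkT : k ∈ T) {a b : α} (ha : a ∈ S) (hb : b ∈ T) : ¬ G.Adj a b := by
  by_cases hbS : b ∈ S
  · exact hS.2 a ha b hbS
  · exact fun hab => hT.2 k hkT b hb ((hS.1 a ha k hkS b hbS).mp hab)

theorem sUnion {𝒮 : Set (Set α)} {k : α} (h𝒮 : ∀ S ∈ 𝒮, AISet G S ∧ k ∈ S) :
    AISet G (⋃₀ 𝒮) := by
  constructor
  · rintro a ⟨S, hS, ha⟩ b ⟨T, hT, hb⟩ j hj
    have hjS : j ∉ S := fun h => hj ⟨S, hS, h⟩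
    have hjT : j ∉ T := fun h => hj ⟨T, hT, h⟩
    exact ((h𝒮 S hS).1.1 a ha k (h𝒮 S hS).2 j hjS).trans
      ((h𝒮 T hT).1.1 k (h𝒮 T hT).2 b hb j hjT)
  · rintro a ⟨S, hS, ha⟩ b ⟨T, hT, hb⟩
    exact not_adj_of_mem (h𝒮 S hS).1 (h𝒮 T hT).1 (h𝒮 S hS).2 (h𝒮 T hT).2 ha hb

theorem union {S T : Set α} {k : α} (hS : AISet G S) (hT : AISet G T) (hkS : k ∈ S)
    (hkT : k ∈ T) : AISet G (S ∪ T) := by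
  rw [← Set.sUnion_pair]
  exact sUnion (k := k) (by rintro U (rfl | rfl); exacts [⟨hS, hkS⟩, ⟨hT, hkT⟩])

end AISet

section aiComp

variable {α : Type*} (G : SimpleGraph α)

theorem aiSet_aiComp (i : α) : AISet G (aiComp G i) :=
  AISet.sUnion fun _ hS => hS

theorem mem_aiComp (i : α) : i ∈ aiComp G i :=
  ⟨{i}, ⟨AISet.singleton i, rfl⟩, rfl⟩

variable {G}

theorem AISet.subset_aiComp {S : Set α} {i : α} (hS : AISet G S) (hi : i ∈ S) :
    S ⊆ aiComp G i :=
  Set.subset_sUnion_of_mem ⟨hS, hi⟩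

theorem aiComp_subset_of_mem {i j k : α} (hki : k ∈ aiComp G i) (hkj : k ∈ aiComp G j) :
    aiComp G i ⊆ aiComp G j :=
  have hunion := (aiSet_aiComp G i).union (aiSet_aiComp G j) hki hkj
  Set.subset_union_left.trans (hunion.subset_aiComp (Or.inr (mem_aiComp G j)))

end aiComp

theorem ai_components_partition {α : Type*} (G : SimpleGraph α) :
    (∀ i : α, AISet G (aiComp G i)) ∧
    (∀ i : α, i ∈ aiComp G i) ∧
    (∀ i j : α, aiComp G i = aiComp G j ∨ Disjoint (aiComp G i) (aiComp G j)) := by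
  refine ⟨aiSet_aiComp G, mem_aiComp G, fun i j => ?_⟩
  rw [or_iff_not_imp_right, Set.not_disjoint_iff]
  rintro ⟨k, hki, hkj⟩
  exact (aiComp_subset_of_mem hki hkj).antisymm (aiComp_subset_of_mem hkj hki)
end
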